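/- Let F be an invertible 3×3 real matrix with det F > 0, set C = Fᵀ F and B = F Fᵀ, and let h be an isotropic map from 3×3 real symmetric positive-definite matrices to 3×3 real symmetric matrices. Then F * h(C) * Fᵀ = h(B) * B; i.e. the Cauchy stress tensor divided by the density is given by σ/ρ = h(B) B. -/

import Mathlib

/-!
Write `B = F Fᵀ` and `V = √B`. Then `R = V⁻¹ F` is a rotation, `F = V R` and `C = Rᵀ B R`, so
isotropy gives `F h(C) Fᵀ = V h(B) V`. In an orthonormal eigenbasis of `B`, every diagonal sign
matrix of determinant one is a rotation fixing `B`; isotropy makes `h(B)` invariant under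
conjugation by all of them, which in dimension at least three forces `h(B)` to be diagonal in that
basis. Hence `h(B)` commutes with `B` and with `V`, and `V h(B) V = h(B) V² = h(B) B`.
-/

open Matrix
open scoped MatrixOrder

variable {n : Type*} [Fintype n] [DecidableEq n]

def IsIsotropic (h : Matrix n n ℝ → Matrix n n ℝ) : Prop :=
  ∀ M : Matrix n n ℝ, M.PosDef → ∀ R : Matrix n n ℝ, Rᵀ * R = 1 → R.det = 1 →
    h (Rᵀ * M * R) = Rᵀ * h M * R

namespace Matrix

theorem det_eq_one_of_transpose_mul_self_eq_one {R : Matrix n n ℝ} (hR : Rᵀ * R = 1)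
    (hpos : 0 < R.det) : R.det = 1 := by
  have hsq : R.det * R.det = 1 := by simpa using congrArg det hR
  nlinarith

theorem isDiag_of_forall_sign_conj_eq (hn : 3 ≤ Fintype.card n) {M : Matrix n n ℝ}
    (hM : ∀ s : n → ℝ, s * s = 1 → ∏ i, s i = 1 → diagonal s * M * diagonal s = M) :
    M.IsDiag := by
  intro i j hij
  obtain ⟨k, hki, hkj⟩ : ∃ k, k ≠ i ∧ k ≠ j :=
    ENat.exists_ne_ne_of_three_le (by simpa [ENat.card_eq_coe_fintype_card] using hn) i j
  -- flipping the signs at `i` and `k` (a rotation, as there are two flips) negates `M i j`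
  set s : n → ℝ := fun l => (if l = i then -1 else 1) * (if l = k then -1 else 1)
  have hs : s * s = 1 := by
    ext l
    simp only [s, Pi.mul_apply, Pi.one_apply]
    split_ifs <;> norm_num
  have hprod : ∏ l, s l = 1 := by
    simp only [s, Finset.prod_mul_distrib, Fintype.prod_ite_eq']
    norm_num
  have hsi : s i = -1 := by simp [s, hki.symm]
  have hsj : s j = 1 := by simp [s, hij.symm, hkj.symm]
  have hentry := congrFun (congrFun (hM s hs hprod) i) j
  rw [mul_diagonal, diagonal_mul, hsi, hsj] at hentry
  linarith

theorem transpose_conjStarAlgAut (U : unitaryGroup n ℝ) (X : Matrix n n ℝ) :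
    (Unitary.conjStarAlgAut ℝ _ U X)ᵀ = Unitary.conjStarAlgAut ℝ _ U Xᵀ := by
  simpa only [star_eq_conjTranspose, conjTranspose_eq_transpose_of_trivial] using
    (map_star (Unitary.conjStarAlgAut ℝ _ U) X).symm

theorem det_conjStarAlgAut (U : unitaryGroup n ℝ) (X : Matrix n n ℝ) :
    (Unitary.conjStarAlgAut ℝ _ U X).det = X.det := by
  rw [Unitary.conjStarAlgAut_apply, det_mul, det_mul, mul_comm, ← mul_assoc, ← det_mul,
    Unitary.coe_star_mul_self, det_one, one_mul]

theorem posDef_mul_transpose_self {F : Matrix n n ℝ} (hF : IsUnit F) : (F * Fᵀ).PosDef := by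
  simpa using PosDef.mul_conjTranspose_self F (vecMul_injective_iff_isUnit.2 hF)

theorem transpose_sqrt (A : Matrix n n ℝ) : (CFC.sqrt A)ᵀ = CFC.sqrt A :=
  IsSymm.eq <| by simpa using (CFC.sqrt_nonneg A).posSemidef.isHermitian

theorem exists_rotation_eq_mul_of_mul_self_eq {F V : Matrix n n ℝ} (hF : 0 < F.det)
    (hV : 0 < V.det) (hVt : Vᵀ = V) (hVV : V * V = F * Fᵀ) :
    ∃ R : Matrix n n ℝ, Rᵀ * R = 1 ∧ R.det = 1 ∧ F = V * R := by
  have hR : (V⁻¹ * F)ᵀ * (V⁻¹ * F) = 1 := by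
    refine mul_eq_one_comm.1 ?_
    rw [transpose_mul, transpose_nonsing_inv, hVt, Matrix.mul_assoc, ← Matrix.mul_assoc F, ← hVV,
      mul_nonsing_inv_cancel_right _ _ hV.ne'.isUnit, nonsing_inv_mul _ hV.ne'.isUnit]
  refine ⟨V⁻¹ * F, hR, det_eq_one_of_transpose_mul_self_eq_one hR ?_,
    (mul_nonsing_inv_cancel_left V F hV.ne'.isUnit).symm⟩
  rw [det_mul, det_nonsing_inv, Ring.inverse_eq_inv']
  exact mul_pos (inv_pos.2 hV) hF

end Matrix

namespace IsIsotropic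

variable {h : Matrix n n ℝ → Matrix n n ℝ}

theorem apply_commute (hh : IsIsotropic h) (hn : 3 ≤ Fintype.card n) {B : Matrix n n ℝ}
    (hB : B.PosDef) : Commute (h B) B := by
  set φ := Unitary.conjStarAlgAut ℝ (Matrix n n ℝ) hB.isHermitian.eigenvectorUnitary
  set ev : n → ℝ := RCLike.ofReal ∘ hB.isHermitian.eigenvalues
  have hBD : B = φ (diagonal ev) := hB.isHermitian.spectral_theorem
  have hdiag : (φ.symm (h B)).IsDiag := by
    refine isDiag_of_forall_sign_conj_eq hn fun s hs hprod => ?_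
    set R := φ (diagonal s)
    have hRt : Rᵀ = R := by rw [transpose_conjStarAlgAut, diagonal_transpose]
    have hSS : diagonal s * diagonal s = 1 := by
      rw [diagonal_mul_diagonal, ← Pi.mul_def, hs]
      exact diagonal_one
    have hR : Rᵀ * R = 1 := by rw [hRt, ← map_mul, hSS, map_one]
    have hRdet : R.det = 1 := by rw [det_conjStarAlgAut, det_diagonal, hprod]
    have hRB : Rᵀ * B * R = B := by
      rw [hRt, hBD, ← map_mul, ← map_mul, (commute_diagonal _ _).eq, Matrix.mul_assoc, hSS,
        Matrix.mul_one]
    have hiso := hh B hB R hR hRdet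
    rw [hRB, hRt] at hiso
    calc diagonal s * φ.symm (h B) * diagonal s = φ.symm (R * h B * R) := by
          simp only [R, map_mul, φ.symm_apply_apply]
      _ = φ.symm (h B) := by rw [← hiso]
  have hcomm := (commute_diagonal (diag (φ.symm (h B))) ev).map φ
  rwa [hdiag.diagonal_diag, φ.apply_symm_apply, ← hBD] at hcomm

theorem mul_apply_transpose_mul_self_mul_transpose (hh : IsIsotropic h)
    (hn : 3 ≤ Fintype.card n) {F : Matrix n n ℝ} (hF : 0 < F.det) :
    F * h (Fᵀ * F) * Fᵀ = h (F * Fᵀ) * (F * Fᵀ) := by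
  have hB := posDef_mul_transpose_self ((isUnit_iff_isUnit_det F).2 hF.ne'.isUnit)
  have hVV := CFC.sqrt_mul_sqrt_self (F * Fᵀ) hB.posSemidef.nonneg
  have hVt := transpose_sqrt (F * Fᵀ)
  have hV : 0 < (CFC.sqrt (F * Fᵀ)).det := by
    rw [hB.posSemidef.det_sqrt, RCLike.sqrt_real]
    exact Real.sqrt_pos.2 hB.det_pos
  have hVh : Commute (CFC.sqrt (F * Fᵀ)) (h (F * Fᵀ)) := by
    rw [CFC.sqrt_eq_cfc]
    exact (hh.apply_commute hn hB).symm.cfc_nnreal _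
  generalize CFC.sqrt (F * Fᵀ) = V at hVV hVt hV hVh
  obtain ⟨R, hR, hRdet, hFVR⟩ := exists_rotation_eq_mul_of_mul_self_eq hF hV hVt hVV
  generalize F * Fᵀ = B at hB hVV hVh ⊢
  subst hFVR
  have hRRt : R * Rᵀ = 1 := mul_eq_one_comm.1 hR
  have hC : (V * R)ᵀ * (V * R) = Rᵀ * B * R := by
    rw [transpose_mul, hVt, Matrix.mul_assoc, ← Matrix.mul_assoc V, hVV, Matrix.mul_assoc]
  rw [hC, hh B hB R hR hRdet]
  calc V * R * (Rᵀ * h B * R) * (V * R)ᵀ = V * (R * Rᵀ) * h B * (R * Rᵀ) * V := by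
        rw [transpose_mul, hVt]
        simp only [Matrix.mul_assoc]
    _ = h B * (V * V) := by rw [hRRt, Matrix.mul_one, Matrix.mul_one, hVh.eq, Matrix.mul_assoc]
    _ = h B * B := by rw [hVV]

end IsIsotropic

theorem cauchy_stress_eq_h_mul_B_general
    (F : Matrix (Fin 3) (Fin 3) ℝ) (hFdet : 0 < F.det)
    (h : Matrix (Fin 3) (Fin 3) ℝ → Matrix (Fin 3) (Fin 3) ℝ)
    (hiso : ∀ M : Matrix (Fin 3) (Fin 3) ℝ, M.PosDef →
      ∀ R : Matrix (Fin 3) (Fin 3) ℝ, Rᵀ * R = 1 → R.det = 1 →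
        h (Rᵀ * M * R) = Rᵀ * h M * R) :
    F * h (Fᵀ * F) * Fᵀ = h (F * Fᵀ) * (F * Fᵀ) :=
  IsIsotropic.mul_apply_transpose_mul_self_mul_transpose hiso (by simp) hFdet

/-- For an invertible `F` with positive determinant and an isotropic map `h`, with
`C = Fᵀ F` and `B = F Fᵀ`, the Cauchy stress divided by the density satisfies
`F h(C) Fᵀ = h(B) B`. -/
theorem cauchy_stress_eq_h_mul_B
    (F : Matrix (Fin 3) (Fin 3) ℝ) (hFdet : 0 < F.det)
    (h : Matrix (Fin 3) (Fin 3) ℝ → Matrix (Fin 3) (Fin 3) ℝ)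
    (hsym : ∀ M : Matrix (Fin 3) (Fin 3) ℝ, M.PosDef → (h M)ᵀ = h M)
    (hiso : ∀ M : Matrix (Fin 3) (Fin 3) ℝ, M.PosDef →
      ∀ R : Matrix (Fin 3) (Fin 3) ℝ, Rᵀ * R = 1 → R.det = 1 →
        h (Rᵀ * M * R) = Rᵀ * h M * R) :
    F * h (Fᵀ * F) * Fᵀ = h (F * Fᵀ) * (F * Fᵀ) :=
  cauchy_stress_eq_h_mul_B_general F hFdet h hiso
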